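/- Every no-signaling box P(ab|xy) with binary inputs and outputs whose CHSH value I(P) = Σ_{abxy}(−1)^{a+b+xy}P(ab|xy) satisfies |I(P)| > 2 is not a local box, i.e., cannot be written as a convex combination of products of local strategies. -/

import Mathlib

open scoped BigOperators

noncomputable section

/-- A bipartite box with binary inputs and outputs: `P a b x y` is the probability
of outputs `(a, b)` given inputs `(x, y)`. -/
abbrev Box := Fin 2 → Fin 2 → Fin 2 → Fin 2 → ℝ

/-- A no-signaling box: nonnegative, normalized, and no-signaling in both
directions. -/
def IsNSBox (P : Box) : Prop :=
  (∀ a b x y, 0 ≤ P a b x y) ∧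
  (∀ x y, ∑ a, ∑ b, P a b x y = 1) ∧
  (∀ a x y y', ∑ b, P a b x y = ∑ b, P a b x y') ∧
  (∀ b x x' y, ∑ a, P a b x y = ∑ a, P a b x' y)

/-- A local (LOSR-free) box: a convex combination of products of local (stochastic)
strategies. -/
def IsLocalBox (P : Box) : Prop :=
  ∃ (k : ℕ) (q : Fin k → ℝ) (PA PB : Fin k → Fin 2 → Fin 2 → ℝ),
    (∀ i, 0 ≤ q i) ∧ (∑ i, q i = 1) ∧
    (∀ i a x, 0 ≤ PA i a x) ∧ (∀ i x, ∑ a, PA i a x = 1) ∧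
    (∀ i b y, 0 ≤ PB i b y) ∧ (∀ i y, ∑ b, PB i b y = 1) ∧
    ∀ a b x y, P a b x y = ∑ i, q i * PA i a x * PB i b y

/-- The CHSH functional. -/
def chsh (P : Box) : ℝ :=
  ∑ a, ∑ b, ∑ x, ∑ y, (-1 : ℝ) ^ (a.val + b.val + x.val * y.val) * P a b x y

/-- The Tsirelson box. -/
def PTsi : Box := fun a b x y =>
  (1 + (-1 : ℝ) ^ (a.val + b.val + x.val * y.val) / Real.sqrt 2) / 4

/-! A local box is a convex mixture of product boxes `A(a|x) B(b|y)`, and CHSH is linear, so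
it suffices to bound product boxes. There the CHSH value is `A₀B₀ + A₀B₁ + A₁B₀ - A₁B₁` in the
correlators `Aₓ = A(0|x) - A(1|x)`, `B_y = B(0|y) - B(1|y)`, all in `[-1, 1]`; writing it as
`A₀(B₀ + B₁) + A₁(B₀ - B₁)` bounds it by `|B₀ + B₁| + |B₀ - B₁| = 2 max(|B₀|, |B₁|) ≤ 2`. -/

lemma abs_chsh_correlators_le_two {A₀ A₁ B₀ B₁ : ℝ} (hA₀ : |A₀| ≤ 1) (hA₁ : |A₁| ≤ 1)
    (hB₀ : |B₀| ≤ 1) (hB₁ : |B₁| ≤ 1) :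
    |A₀ * B₀ + A₀ * B₁ + A₁ * B₀ - A₁ * B₁| ≤ 2 := by
  have hsum : |B₀ + B₁| + |B₀ - B₁| ≤ 2 := by
    rw [abs_le] at hB₀ hB₁
    rcases abs_cases (B₀ + B₁) with ⟨h, _⟩ | ⟨h, _⟩ <;>
      rcases abs_cases (B₀ - B₁) with ⟨h', _⟩ | ⟨h', _⟩ <;> linarith
  calc |A₀ * B₀ + A₀ * B₁ + A₁ * B₀ - A₁ * B₁|
      = |A₀ * (B₀ + B₁) + A₁ * (B₀ - B₁)| := by ring_nf
    _ ≤ |A₀| * |B₀ + B₁| + |A₁| * |B₀ - B₁| := by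
        simpa only [abs_mul] using abs_add_le (A₀ * (B₀ + B₁)) (A₁ * (B₀ - B₁))
    _ ≤ |B₀ + B₁| + |B₀ - B₁| :=
        add_le_add (mul_le_of_le_one_left (abs_nonneg _) hA₀)
          (mul_le_of_le_one_left (abs_nonneg _) hA₁)
    _ ≤ 2 := hsum

lemma abs_sub_le_one_of_sum_eq_one {p : Fin 2 → ℝ} (hp : ∀ a, 0 ≤ p a) (hsum : ∑ a, p a = 1) :
    |p 0 - p 1| ≤ 1 := by
  rw [Fin.sum_univ_two] at hsum
  rw [abs_le]
  constructor <;> linarith [hp 0, hp 1]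

lemma chsh_sum_mul {ι : Type*} [Fintype ι] (q : ι → ℝ) (Q : ι → Box) :
    chsh (fun a b x y => ∑ i, q i * Q i a b x y) = ∑ i, q i * chsh (Q i) := by
  simp only [chsh, Finset.mul_sum, mul_left_comm _ (q _)]
  simp only [Finset.sum_comm (γ := ι)]

lemma chsh_product (A B : Fin 2 → Fin 2 → ℝ) :
    chsh (fun a b x y => A a x * B b y) =
      (A 0 0 - A 1 0) * (B 0 0 - B 1 0) + (A 0 0 - A 1 0) * (B 0 1 - B 1 1)
        + (A 0 1 - A 1 1) * (B 0 0 - B 1 0) - (A 0 1 - A 1 1) * (B 0 1 - B 1 1) := by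
  simp only [chsh, Fin.sum_univ_two, Fin.isValue, Fin.coe_ofNat_eq_mod, Nat.zero_mod, mul_zero,
    add_zero, Nat.mod_succ, mul_one, pow_zero, one_mul, zero_add, pow_one, neg_mul, Nat.reduceAdd,
    even_two, Even.neg_pow, one_pow]
  ring

lemma abs_chsh_product_le_two {A B : Fin 2 → Fin 2 → ℝ}
    (hA : ∀ a x, 0 ≤ A a x) (hA₁ : ∀ x, ∑ a, A a x = 1)
    (hB : ∀ b y, 0 ≤ B b y) (hB₁ : ∀ y, ∑ b, B b y = 1) :
    |chsh (fun a b x y => A a x * B b y)| ≤ 2 := by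
  have hA' x := abs_sub_le_one_of_sum_eq_one (hA · x) (hA₁ x)
  have hB' y := abs_sub_le_one_of_sum_eq_one (hB · y) (hB₁ y)
  rw [chsh_product]
  exact abs_chsh_correlators_le_two (hA' 0) (hA' 1) (hB' 0) (hB' 1)

theorem abs_chsh_le_two_of_isLocalBox {P : Box} (hP : IsLocalBox P) : |chsh P| ≤ 2 := by
  obtain ⟨k, q, PA, PB, hq, hq₁, hPA, hPA₁, hPB, hPB₁, hPq⟩ := hP
  have hP_eq : P = fun a b x y => ∑ i, q i * (PA i a x * PB i b y) := by
    ext; simp only [hPq, mul_assoc]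
  rw [hP_eq, chsh_sum_mul]
  calc |∑ i, q i * chsh (fun a b x y => PA i a x * PB i b y)|
      ≤ ∑ i, q i * 2 := by
        refine (Finset.abs_sum_le_sum_abs _ _).trans (Finset.sum_le_sum fun i _ => ?_)
        rw [abs_mul, abs_of_nonneg (hq i)]
        exact mul_le_mul_of_nonneg_left
          (abs_chsh_product_le_two (hPA i) (hPA₁ i) (hPB i) (hPB₁ i)) (hq i)
    _ = 2 := by rw [← Finset.sum_mul, hq₁, one_mul]

theorem stmt6_general (P : Box) (hI : |chsh P| > 2) : ¬ IsLocalBox P :=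
  fun hloc => (abs_chsh_le_two_of_isLocalBox hloc).not_gt hI

/-- every no-signaling box whose CHSH value exceeds 2 in absolute
value is not local. -/
theorem stmt6 (P : Box) (hP : IsNSBox P) (hI : |chsh P| > 2) : ¬ IsLocalBox P :=
  stmt6_general P hI
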